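/- Let h : {-1,1}^n → {0,1}, α = Pr[h(X)=1] with 0 < α ≤ 1. Then Σ_{k=1}^n ĥ({k})² ≤ min(2α² log(1/α), α/2). -/
import Mathlib


open Finset Real
open scoped Classical

/-- The real value of a coordinate: `true ↦ 1`, `false ↦ -1`, encoding `{-1,1}`. -/
noncomputable def chi (b : Bool) : ℝ := if b then 1 else -1

/-- Expectation with respect to the uniform measure on `{-1,1}^n`. -/
noncomputable def Ex (n : ℕ) (φ : (Fin n → Bool) → ℝ) : ℝ :=
  (∑ x : Fin n → Bool, φ x) / 2 ^ n

/-- Probability with respect to the uniform measure on `{-1,1}^n`. -/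
noncomputable def Pr (n : ℕ) (p : (Fin n → Bool) → Prop) : ℝ :=
  Ex n (fun x => if p x then 1 else 0)

/-- Expectation for two independent uniform vectors on `{-1,1}^n`. -/
noncomputable def Ex2 (n : ℕ) (φ : (Fin n → Bool) → (Fin n → Bool) → ℝ) : ℝ :=
  (∑ x : Fin n → Bool, ∑ y : Fin n → Bool, φ x y) / 2 ^ (2 * n)

/-- Probability for two independent uniform vectors on `{-1,1}^n`. -/
noncomputable def Pr2 (n : ℕ) (p : (Fin n → Bool) → (Fin n → Bool) → Prop) : ℝ :=
  Ex2 n (fun x y => if p x y then 1 else 0)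

/-- Fourier coefficient `ĥ(S) = E[h(X)·∏_{i∈S} X_i]`. -/
noncomputable def coeff (n : ℕ) (h : (Fin n → Bool) → ℝ) (S : Finset (Fin n)) : ℝ :=
  Ex n (fun x => h x * ∏ i ∈ S, chi (x i))

/-- Pointwise negation `x ↦ -x` on `{-1,1}^n`. -/
def neg (n : ℕ) (x : Fin n → Bool) : Fin n → Bool := fun i => !(x i)

lemma chi_mul_self (b : Bool) : chi b * chi b = 1 := by cases b <;> simp [chi]
lemma chi_not (b : Bool) : chi (!b) = - chi b := by cases b <;> simp [chi]

lemma Ex_add (n : ℕ) (φ ψ : (Fin n → Bool) → ℝ) :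
    Ex n (fun x => φ x + ψ x) = Ex n φ + Ex n ψ := by
  simp [Ex, Finset.sum_add_distrib, add_div]

lemma Ex_sub (n : ℕ) (φ ψ : (Fin n → Bool) → ℝ) :
    Ex n (fun x => φ x - ψ x) = Ex n φ - Ex n ψ := by
  simp [Ex, Finset.sum_sub_distrib, sub_div]

lemma Ex_const_mul (n : ℕ) (c : ℝ) (φ : (Fin n → Bool) → ℝ) :
    Ex n (fun x => c * φ x) = c * Ex n φ := by
  simp [Ex, ← Finset.mul_sum, mul_div_assoc]

lemma Ex_div (n : ℕ) (c : ℝ) (φ : (Fin n → Bool) → ℝ) :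
    Ex n (fun x => φ x / c) = Ex n φ / c := by
  unfold Ex
  rw [← Finset.sum_div, div_right_comm]

lemma Ex_const (n : ℕ) (c : ℝ) : Ex n (fun _ => c) = c := by
  simp [Ex, Finset.sum_const, Finset.card_univ]

lemma Ex_mono (n : ℕ) {φ ψ : (Fin n → Bool) → ℝ} (H : ∀ x, φ x ≤ ψ x) :
    Ex n φ ≤ Ex n ψ := by
  unfold Ex
  gcongr
  exact H _

lemma Ex_nonneg (n : ℕ) {φ : (Fin n → Bool) → ℝ} (H : ∀ x, 0 ≤ φ x) :
    0 ≤ Ex n φ := by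
  have := Ex_mono n (φ := fun _ => (0:ℝ)) (ψ := φ) H
  simpa [Ex_const] using this

lemma Ex_sum {ι : Type*} (n : ℕ) (s : Finset ι) (φ : ι → (Fin n → Bool) → ℝ) :
    Ex n (fun x => ∑ i ∈ s, φ i x) = ∑ i ∈ s, Ex n (φ i) := by
  simp [Ex, Finset.sum_div]
  rw [Finset.sum_comm]

lemma neg_invol (n : ℕ) : Function.Involutive (neg n) := by
  intro x; funext i; simp [neg]

lemma Ex_reindex (n : ℕ) (φ : (Fin n → Bool) → ℝ) :
    Ex n (fun x => φ (neg n x)) = Ex n φ := by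
  unfold Ex
  congr 1
  exact Fintype.sum_bijective (neg n) (neg_invol n).bijective _ _ (fun x => rfl)

lemma coeff_singleton (n : ℕ) (h : (Fin n → Bool) → ℝ) (k : Fin n) :
    coeff n h {k} = Ex n (fun x => h x * chi (x k)) := by
  simp [coeff]

/-- Orthonormality of the characters χ_j. -/
lemma Ex_chi_mul_chi (n : ℕ) (j k : Fin n) :
    Ex n (fun x => chi (x j) * chi (x k)) = if j = k then 1 else 0 := by
  rcases eq_or_ne j k with rfl | hjk
  · simp only [chi_mul_self, if_true, Ex_const]
  · simp only [if_neg hjk]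
    have hinv : Function.Involutive (fun x : Fin n → Bool => Function.update x j (!(x j))) := by
      intro x; funext i
      rcases eq_or_ne i j with rfl | hij
      · simp
      · simp [Function.update_of_ne hij]
    have key : ∑ x : Fin n → Bool, chi (x j) * chi (x k) = 0 := by
      have hre : ∑ x : Fin n → Bool,
          chi ((Function.update x j (!(x j))) j) * chi ((Function.update x j (!(x j))) k)
          = ∑ x : Fin n → Bool, chi (x j) * chi (x k) :=
        Fintype.sum_bijective _ hinv.bijective _ _ (fun x => rfl)
      have hneg : ∑ x : Fin n → Bool,
          chi ((Function.update x j (!(x j))) j) * chi ((Function.update x j (!(x j))) k)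
          = - ∑ x : Fin n → Bool, chi (x j) * chi (x k) := by
        rw [← Finset.sum_neg_distrib]
        refine Finset.sum_congr rfl fun x _ => ?_
        rw [Function.update_self, Function.update_of_ne (Ne.symm hjk), chi_not, neg_mul]
      linarith [hre, hneg.symm.trans hre]
    simp [Ex, key]

/-- Product formula: expectation of a product over independent coordinates. -/
lemma Ex_prod (n : ℕ) (g : Fin n → Bool → ℝ) :
    Ex n (fun x => ∏ k, g k (x k)) = ∏ k, ((g k true + g k false) / 2) := by
  unfold Ex
  rw [Finset.prod_div_distrib, Finset.prod_const]
  have hcard : (Finset.univ : Finset (Fin n)).card = n := by simp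
  rw [hcard]
  congr 1
  rw [← Fintype.piFinset_univ, ← Finset.prod_univ_sum]
  congr 1
  funext k
  simp [Fintype.sum_bool]

lemma Ex_neg' (n : ℕ) (φ : (Fin n → Bool) → ℝ) :
    Ex n (fun x => -φ x) = -Ex n φ := by
  simp [Ex, Finset.sum_neg_distrib, neg_div]

/-- The level-1 part `L(x) = Σ_k ĥ({k}) x_k`. -/
noncomputable def Lfun (n : ℕ) (h : (Fin n → Bool) → ℝ) : (Fin n → Bool) → ℝ :=
  fun x => ∑ k, coeff n h {k} * chi (x k)

/-- If `f` has the same level-1 coefficients as `h`, then `E[f·L] = Σ ĥ({k})²`. -/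
lemma Ex_mul_L (n : ℕ) (h f : (Fin n → Bool) → ℝ)
    (hf : ∀ k, Ex n (fun x => f x * chi (x k)) = coeff n h {k}) :
    Ex n (fun x => f x * Lfun n h x) = ∑ k : Fin n, (coeff n h {k})^2 := by
  have e1 : (fun x => f x * Lfun n h x)
      = fun x => ∑ k, coeff n h {k} * (f x * chi (x k)) := by
    funext x
    rw [Lfun, Finset.mul_sum]
    exact Finset.sum_congr rfl fun k _ => by ring
  rw [e1, Ex_sum]
  refine Finset.sum_congr rfl fun k _ => ?_
  rw [Ex_const_mul, hf k, sq]

lemma Ex_L_mul_L (n : ℕ) (h : (Fin n → Bool) → ℝ) :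
    Ex n (fun x => Lfun n h x * Lfun n h x) = ∑ k : Fin n, (coeff n h {k})^2 := by
  have e1 : (fun x => Lfun n h x * Lfun n h x)
      = fun x => ∑ j, ∑ k, (coeff n h {j} * coeff n h {k}) * (chi (x j) * chi (x k)) := by
    funext x
    rw [Lfun, Finset.sum_mul_sum]
    exact Finset.sum_congr rfl fun j _ => Finset.sum_congr rfl fun k _ => by ring
  rw [e1, Ex_sum]
  refine Finset.sum_congr rfl fun j _ => ?_
  rw [Ex_sum]
  have e2 : ∀ k : Fin n, Ex n (fun x => (coeff n h {j} * coeff n h {k}) * (chi (x j) * chi (x k)))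
      = (coeff n h {j} * coeff n h {k}) * (if j = k then 1 else 0) := by
    intro k
    rw [Ex_const_mul, Ex_chi_mul_chi]
  simp only [e2, mul_ite, mul_one, mul_zero]
  rw [Finset.sum_ite_eq]
  simp [sq]

/-- Σ_k ĥ({k})² ≤ min(2α² log(1/α), α/2). -/
theorem stmt8 (n : ℕ) (h : (Fin n → Bool) → ℝ)
    (hval : ∀ x, h x = 0 ∨ h x = 1) (α : ℝ)
    (hα : α = Pr n (fun x => h x = 1)) (hpos : 0 < α) (hle : α ≤ 1) :
    ∑ k : Fin n, (coeff n h {k}) ^ 2 ≤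
      min (2 * α ^ 2 * Real.log (1 / α)) (α / 2) := by
  classical
  have h01 : ∀ x, 0 ≤ h x ∧ h x ≤ 1 := by
    intro x
    rcases hval x with h0 | h1
    · rw [h0]; norm_num
    · rw [h1]; norm_num
  set σ2 : ℝ := ∑ k : Fin n, (coeff n h {k})^2 with hσ2
  have hσ2nn : 0 ≤ σ2 := Finset.sum_nonneg fun k _ => sq_nonneg _
  have hEh : Ex n h = α := by
    rw [hα]; unfold Pr
    congr 1; funext x
    rcases hval x with h0 | h1
    · simp [h0]
    · simp [h1]
  have hEhL : Ex n (fun x => h x * Lfun n h x) = σ2 :=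
    Ex_mul_L n h h fun k => (coeff_singleton n h k).symm
  -- MGF bound
  have hMGF : ∀ t : ℝ, Ex n (fun x => Real.exp (t * Lfun n h x))
      ≤ Real.exp (t^2 * σ2 / 2) := by
    intro t
    have e1 : (fun x => Real.exp (t * Lfun n h x))
        = fun x => ∏ k, Real.exp (t * coeff n h {k} * chi (x k)) := by
      funext x
      rw [← Real.exp_sum]
      congr 1
      rw [Lfun, Finset.mul_sum]
      exact Finset.sum_congr rfl fun k _ => by ring
    rw [e1, Ex_prod n (fun k b => Real.exp (t * coeff n h {k} * chi b))]
    have e2 : ∀ k : Fin n, (Real.exp (t * coeff n h {k} * chi true)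
        + Real.exp (t * coeff n h {k} * chi false)) / 2
        = Real.cosh (t * coeff n h {k}) := by
      intro k
      rw [Real.cosh_eq]
      simp [chi]
    simp only [e2]
    calc ∏ k, Real.cosh (t * coeff n h {k})
        ≤ ∏ k, Real.exp ((t * coeff n h {k})^2 / 2) :=
          Finset.prod_le_prod (fun k _ => (Real.cosh_pos _).le)
            (fun k _ => Real.cosh_le_exp_half_sq _)
      _ = Real.exp (∑ k, (t * coeff n h {k})^2 / 2) := by rw [Real.exp_sum]
      _ = Real.exp (t^2 * σ2 / 2) := by
          congr 1
          have : ∀ k : Fin n, (t * coeff n h {k})^2 / 2 = t^2/2 * (coeff n h {k})^2 :=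
            fun k => by ring
          simp only [this]
          rw [← Finset.mul_sum, ← hσ2]
          ring
  -- Chang's bound
  have chang : σ2 ≤ 2 * α ^ 2 * Real.log (1 / α) := by
    set t : ℝ := 1 / α with ht
    have htpos : 0 < t := by positivity
    set A : ℝ := Real.exp (t ^ 2 * σ2 / 2) / α with hA
    have hApos : 0 < A := by positivity
    have hlogA : Real.log A = t ^ 2 * σ2 / 2 + Real.log (1 / α) := by
      rw [hA, Real.log_div (Real.exp_ne_zero _) (ne_of_gt hpos), Real.log_exp,
        one_div, Real.log_inv]
      ring
    have hpt : ∀ x, h x * Lfun n h x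
        ≤ h x * ((Real.log A - 1) / t) + Real.exp (t * Lfun n h x) / (A * t) := by
      intro x
      rcases hval x with h0 | h1
      · rw [h0]; simp only [zero_mul, zero_add]
        positivity
      · rw [h1]; simp only [one_mul]
        have hexp : t * Lfun n h x - Real.log A + 1
            ≤ Real.exp (t * Lfun n h x) / A := by
          have := Real.add_one_le_exp (t * Lfun n h x - Real.log A)
          rwa [Real.exp_sub, Real.exp_log hApos] at this
        have goal2 : Lfun n h x * t ≤ (Real.log A - 1) + Real.exp (t * Lfun n h x) / A := by
          nlinarith [hexp]
        calc Lfun n h x = (Lfun n h x * t) / t := by field_simp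
          _ ≤ ((Real.log A - 1) + Real.exp (t * Lfun n h x) / A) / t := by
              apply div_le_div_of_nonneg_right goal2 htpos.le
          _ = (Real.log A - 1) / t + Real.exp (t * Lfun n h x) / (A * t) := by
              rw [add_div, div_div]
    have step1 : σ2 ≤ α * ((Real.log A - 1) / t) + Real.exp (t ^ 2 * σ2 / 2) / (A * t) := by
      have := Ex_mono n hpt
      rw [hEhL] at this
      refine this.trans ?_
      rw [Ex_add]
      have e3 : Ex n (fun x => h x * ((Real.log A - 1) / t))
          = α * ((Real.log A - 1) / t) := by
        have : (fun x => h x * ((Real.log A - 1) / t))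
            = fun x => ((Real.log A - 1) / t) * h x := by funext x; ring
        rw [this, Ex_const_mul, hEh]; ring
      rw [e3]
      gcongr
      have e4 : (fun x => Real.exp (t * Lfun n h x) / (A * t))
          = fun x => Real.exp (t * Lfun n h x) / (A * t) := rfl
      rw [show (fun x => Real.exp (t * Lfun n h x) / (A * t))
          = fun x => (fun y => Real.exp (t * Lfun n h y)) x / (A * t) from rfl, Ex_div]
      have hAt : 0 < A * t := mul_pos hApos htpos
      exact div_le_div_of_nonneg_right (hMGF t) hAt.le
    have hexpA : Real.exp (t ^ 2 * σ2 / 2) / A = α := by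
      rw [hA]; field_simp
    have step2 : σ2 ≤ α * ((Real.log A - 1) / t) + α / t := by
      have : Real.exp (t ^ 2 * σ2 / 2) / (A * t) = α / t := by
        rw [← div_div, hexpA]
      linarith [step1, this.ge, this.le]
    rw [hlogA] at step2
    have halg : α * ((t ^ 2 * σ2 / 2 + Real.log (1 / α) - 1) / t) + α / t
        = σ2 / 2 + α ^ 2 * Real.log (1 / α) := by
      rw [ht]
      field_simp
      ring
    rw [halg] at step2
    linarith
  -- the α/2 bound via the odd part
  have half : σ2 ≤ α / 2 := by
    have hchiO : ∀ k : Fin n, Ex n (fun x =>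
        ((h x - h (neg n x)) / 2) * chi (x k)) = coeff n h {k} := by
      intro k
      have e1 : (fun x => ((h x - h (neg n x)) / 2) * chi (x k))
          = fun x => (h x * chi (x k) - h (neg n x) * chi (x k)) / 2 := by
        funext x; ring
      rw [e1, Ex_div, Ex_sub]
      have h2 : Ex n (fun x => h (neg n x) * chi (x k)) = - coeff n h {k} := by
        have e2 : (fun x => (fun y => h (neg n y) * chi (y k)) (neg n x))
            = fun x => -(h x * chi (x k)) := by
          funext x
          show h (neg n (neg n x)) * chi ((neg n x) k) = -(h x * chi (x k))
          rw [neg_invol n x, show (neg n x) k = !(x k) from rfl, chi_not]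
          ring
        have e3 := Ex_reindex n (fun y => h (neg n y) * chi (y k))
        rw [e2] at e3
        rw [← e3, Ex_neg', ← coeff_singleton]
      rw [h2, ← coeff_singleton]
      ring
    have hOL : Ex n (fun x => ((h x - h (neg n x)) / 2) * Lfun n h x) = σ2 :=
      Ex_mul_L n h _ hchiO
    have hLL : Ex n (fun x => Lfun n h x * Lfun n h x) = σ2 := Ex_L_mul_L n h
    -- Bessel
    have hbes : σ2 ≤ Ex n (fun x => ((h x - h (neg n x)) / 2) * ((h x - h (neg n x)) / 2)) := by
      have hnn : 0 ≤ Ex n (fun x =>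
          (((h x - h (neg n x)) / 2) - Lfun n h x) * (((h x - h (neg n x)) / 2) - Lfun n h x)) :=
        Ex_nonneg n fun x => mul_self_nonneg _
      have e1 : (fun x =>
          (((h x - h (neg n x)) / 2) - Lfun n h x) * (((h x - h (neg n x)) / 2) - Lfun n h x))
          = fun x => ((h x - h (neg n x)) / 2) * ((h x - h (neg n x)) / 2)
            - 2 * (((h x - h (neg n x)) / 2) * Lfun n h x) + Lfun n h x * Lfun n h x := by
        funext x; ring
      rw [e1, Ex_add, Ex_sub, Ex_const_mul, hOL, hLL] at hnn
      linarith
    -- E[O²] ≤ α/2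
    have hhh : Ex n (fun x => h x * h x) = α := by
      have : (fun x => h x * h x) = h := by
        funext x
        rcases hval x with h0 | h1
        · rw [h0]; norm_num
        · rw [h1]; norm_num
      rw [this, hEh]
    have hnegh : Ex n (fun x => h (neg n x) * h (neg n x)) = α := by
      have e3 := Ex_reindex n (fun y => h y * h y)
      rw [hhh] at e3
      exact e3
    have hcross : 0 ≤ Ex n (fun x => h x * h (neg n x)) :=
      Ex_nonneg n fun x => mul_nonneg (h01 x).1 (h01 (neg n x)).1
    have e4 : (fun x => ((h x - h (neg n x)) / 2) * ((h x - h (neg n x)) / 2))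
        = fun x => (h x * h x - 2 * (h x * h (neg n x)) + h (neg n x) * h (neg n x)) / 4 := by
      funext x; ring
    rw [e4] at hbes
    rw [Ex_div, Ex_add, Ex_sub, Ex_const_mul, hhh, hnegh] at hbes
    linarith
  exact le_min chang half
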